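/- Let n ∈ ℝ, k_n = n − 1, and let g be the diagonal metric on {(r,φ) : r > 0} with components g_rr = 1/r^{2n}, g_φφ = 1/r^{2(n−1)}, g_rφ = g_φr = 0. Then the vector fields X₁ = rⁿ cos(k_n φ) ∂/∂r + r^{n−1} sin(k_n φ) ∂/∂φ and X₂ = rⁿ sin(k_n φ) ∂/∂r − r^{n−1} cos(k_n φ) ∂/∂φ satisfy the coordinate Killing equations for g: for every pair of indices i,j ∈ {r,φ} and every point with r > 0, Xᵏ ∂_k g_ij + g_kj ∂_i Xᵏ + g_ik ∂_j Xᵏ = 0 (sum over k ∈ {r,φ}). -/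

import Mathlib

open Real

/-- Partial derivative in the coordinates (r, φ): index 0 is ∂/∂r, index 1 is ∂/∂φ. -/
noncomputable def pd (k : Fin 2) (f : ℝ → ℝ → ℝ) (r φ : ℝ) : ℝ :=
  if k = 0 then deriv (fun x => f x φ) r else deriv (fun x => f r x) φ

/-- Components of the conformal metric ds_n² = (1/r^(2n))(dr² + r² dφ²):
g_rr = r^(−2n), g_φφ = r^(−2(n−1)), g_rφ = g_φr = 0. -/
noncomputable def gmet (n : ℝ) (i j : Fin 2) (r φ : ℝ) : ℝ :=
  if i = 0 ∧ j = 0 then r ^ (-(2*n))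
  else if i = 1 ∧ j = 1 then r ^ (-(2*(n-1)))
  else 0

/-- Components of the vector field X₁ = rⁿ cos(k_n φ) ∂/∂r + r^(n−1) sin(k_n φ) ∂/∂φ. -/
noncomputable def X1 (n : ℝ) (k : Fin 2) (r φ : ℝ) : ℝ :=
  if k = 0 then r ^ n * cos ((n-1)*φ) else r ^ (n-1) * sin ((n-1)*φ)

/-- Components of the vector field X₂ = rⁿ sin(k_n φ) ∂/∂r − r^(n−1) cos(k_n φ) ∂/∂φ. -/
noncomputable def X2 (n : ℝ) (k : Fin 2) (r φ : ℝ) : ℝ :=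
  if k = 0 then r ^ n * sin ((n-1)*φ) else -(r ^ (n-1) * cos ((n-1)*φ))

/-!
Both fields have the form `Xʳ = rⁿ C(φ)`, `X^φ = r^(n-1) S(φ)` with `C' = -(n-1) S` and
`S' = (n-1) C`. The metric is diagonal and independent of `φ`, so the Killing equations reduce
to three scalar identities; in each one the powers of `r` combine to a single power, and the
relations between `C` and `S` make the two remaining terms cancel.
-/

noncomputable def lieDerivMetric (g : Fin 2 → Fin 2 → ℝ → ℝ → ℝ) (X : Fin 2 → ℝ → ℝ → ℝ)
    (i j : Fin 2) (r φ : ℝ) : ℝ :=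
  ∑ k : Fin 2, (X k r φ * pd k (g i j) r φ + g k j r φ * pd i (X k) r φ
    + g i k r φ * pd j (X k) r φ)

def diagMetric (a b : ℝ → ℝ) (i j : Fin 2) (r _φ : ℝ) : ℝ :=
  if i = 0 ∧ j = 0 then a r else if i = 1 ∧ j = 1 then b r else 0

noncomputable def radialField (n : ℝ) (C S : ℝ → ℝ) (k : Fin 2) (r φ : ℝ) : ℝ :=
  if k = 0 then r ^ n * C φ else r ^ (n - 1) * S φ

section DiagMetric

variable (a b : ℝ → ℝ) (X : Fin 2 → ℝ → ℝ → ℝ) (r φ : ℝ)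

lemma lieDerivMetric_diagMetric_zero_zero :
    lieDerivMetric (diagMetric a b) X 0 0 r φ = X 0 r φ * deriv a r + 2 * a r * pd 0 (X 0) r φ := by
  simp [lieDerivMetric, diagMetric, pd, Fin.sum_univ_two]
  ring

lemma lieDerivMetric_diagMetric_zero_one :
    lieDerivMetric (diagMetric a b) X 0 1 r φ = a r * pd 1 (X 0) r φ + b r * pd 0 (X 1) r φ := by
  simp [lieDerivMetric, diagMetric, pd, Fin.sum_univ_two]

lemma lieDerivMetric_diagMetric_one_zero :
    lieDerivMetric (diagMetric a b) X 1 0 r φ = a r * pd 1 (X 0) r φ + b r * pd 0 (X 1) r φ := by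
  simp [lieDerivMetric, diagMetric, pd, Fin.sum_univ_two]

lemma lieDerivMetric_diagMetric_one_one :
    lieDerivMetric (diagMetric a b) X 1 1 r φ = X 0 r φ * deriv b r + 2 * b r * pd 1 (X 1) r φ := by
  simp [lieDerivMetric, diagMetric, pd, Fin.sum_univ_two]
  ring

end DiagMetric

section RadialField

variable (n : ℝ) (C S : ℝ → ℝ) (r φ : ℝ)

lemma pd_zero_radialField_zero : pd 0 (radialField n C S 0) r φ = n * r ^ (n - 1) * C φ := by
  simp [pd, radialField, Real.deriv_rpow_const]

lemma pd_one_radialField_zero : pd 1 (radialField n C S 0) r φ = r ^ n * deriv C φ := by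
  simp [pd, radialField]

lemma pd_zero_radialField_one :
    pd 0 (radialField n C S 1) r φ = (n - 1) * r ^ (n - 1 - 1) * S φ := by
  simp [pd, radialField, Real.deriv_rpow_const]

lemma pd_one_radialField_one : pd 1 (radialField n C S 1) r φ = r ^ (n - 1) * deriv S φ := by
  simp [pd, radialField]

end RadialField

lemma gmet_eq_diagMetric (n : ℝ) :
    gmet n = diagMetric (fun r => r ^ (-(2 * n))) (fun r => r ^ (-(2 * (n - 1)))) :=
  rfl

lemma rpow_mul_rpow_eq_rpow_mul_rpow {r : ℝ} (hr : 0 < r) {a b c d : ℝ} (h : a + b = c + d) :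
    r ^ a * r ^ b = r ^ c * r ^ d := by
  rw [← Real.rpow_add hr, ← Real.rpow_add hr, h]

theorem lieDerivMetric_gmet_radialField_eq_zero (n : ℝ) {C S : ℝ → ℝ} {r φ : ℝ} (hr : 0 < r)
    (hC : deriv C φ = -((n - 1) * S φ)) (hS : deriv S φ = (n - 1) * C φ) (i j : Fin 2) :
    lieDerivMetric (gmet n) (radialField n C S) i j r φ = 0 := by
  have e1 : r ^ n * r ^ (-(2 * n) - 1) = r ^ (-(2 * n)) * r ^ (n - 1) :=
    rpow_mul_rpow_eq_rpow_mul_rpow hr (by ring)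
  have e2 : r ^ (-(2 * n)) * r ^ n = r ^ (-(2 * (n - 1))) * r ^ (n - 1 - 1) :=
    rpow_mul_rpow_eq_rpow_mul_rpow hr (by ring)
  have e3 : r ^ n * r ^ (-(2 * (n - 1)) - 1) = r ^ (-(2 * (n - 1))) * r ^ (n - 1) :=
    rpow_mul_rpow_eq_rpow_mul_rpow hr (by ring)
  rw [gmet_eq_diagMetric]
  fin_cases i <;> fin_cases j <;> dsimp only [Fin.zero_eta, Fin.mk_one]
  · rw [lieDerivMetric_diagMetric_zero_zero, Real.deriv_rpow_const, pd_zero_radialField_zero]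
    simp only [radialField, if_true]
    linear_combination (-(2 * n * C φ)) * e1
  · rw [lieDerivMetric_diagMetric_zero_one, pd_one_radialField_zero, pd_zero_radialField_one, hC]
    linear_combination (-((n - 1) * S φ)) * e2
  · rw [lieDerivMetric_diagMetric_one_zero, pd_one_radialField_zero, pd_zero_radialField_one, hC]
    linear_combination (-((n - 1) * S φ)) * e2
  · rw [lieDerivMetric_diagMetric_one_one, Real.deriv_rpow_const, pd_one_radialField_one, hS]
    simp only [radialField, if_true]
    linear_combination (-(2 * (n - 1) * C φ)) * e3

lemma X1_eq_radialField (n : ℝ) :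
    X1 n = radialField n (fun φ => cos ((n - 1) * φ)) (fun φ => sin ((n - 1) * φ)) :=
  rfl

lemma X2_eq_radialField (n : ℝ) :
    X2 n = radialField n (fun φ => sin ((n - 1) * φ)) (fun φ => -cos ((n - 1) * φ)) := by
  ext k r φ
  fin_cases k <;> simp [X2, radialField]

lemma deriv_cos_const_mul (a φ : ℝ) : deriv (fun x => cos (a * x)) φ = -(a * sin (a * φ)) := by
  rw [deriv_comp_mul_left a cos φ, Real.deriv_cos, smul_eq_mul, mul_neg]

lemma deriv_sin_const_mul (a φ : ℝ) : deriv (fun x => sin (a * x)) φ = a * cos (a * φ) := by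
  rw [deriv_comp_mul_left a sin φ, Real.deriv_sin, smul_eq_mul]

/-- X₁ and X₂ satisfy the coordinate Killing equations
Xᵏ ∂_k g_ij + g_kj ∂_i Xᵏ + g_ik ∂_j Xᵏ = 0 for the metric g on {r > 0}. -/
theorem killing_vectors_of_conformal_metric (n : ℝ) :
    ∀ (i j : Fin 2) (r φ : ℝ), 0 < r →
      (∑ k : Fin 2, (X1 n k r φ * pd k (gmet n i j) r φ
          + gmet n k j r φ * pd i (X1 n k) r φ
          + gmet n i k r φ * pd j (X1 n k) r φ) = 0) ∧
      (∑ k : Fin 2, (X2 n k r φ * pd k (gmet n i j) r φ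
          + gmet n k j r φ * pd i (X2 n k) r φ
          + gmet n i k r φ * pd j (X2 n k) r φ) = 0) := by
  intro i j r φ hr
  constructor
  · change lieDerivMetric (gmet n) (X1 n) i j r φ = 0
    rw [X1_eq_radialField]
    exact lieDerivMetric_gmet_radialField_eq_zero n hr (deriv_cos_const_mul _ _)
      (deriv_sin_const_mul _ _) i j
  · change lieDerivMetric (gmet n) (X2 n) i j r φ = 0
    rw [X2_eq_radialField]
    refine lieDerivMetric_gmet_radialField_eq_zero n hr ?_ ?_ i j
    · rw [deriv_sin_const_mul, mul_neg, neg_neg]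
    · rw [deriv.fun_neg, deriv_cos_const_mul, neg_neg]
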